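/- Let G = (V,E) be a finite connected simple graph and s ∈ V. If u and v are layering-equivalent vertices of G with respect to s (i.e., they lie in the same layering class), then dist_G(u,v) ≤ 3·tl(G) + 1. -/

import Mathlib

open SimpleGraph

/-- A tree decomposition of a graph `G`, with decomposition tree indexed by `ι`. -/
structure TreeDecomp {V : Type} (G : SimpleGraph V) (ι : Type) : Type where
  /-- the decomposition tree -/
  tree : SimpleGraph ι
  /-- the decomposition tree is a tree -/
  isTree : tree.IsTree
  /-- the bags -/
  bag : ι → Set V
  /-- every vertex of `G` belongs to some bag -/
  bag_cover : ∀ v : V, ∃ t, v ∈ bag t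
  /-- both endpoints of every edge of `G` lie in a common bag -/
  bag_edge : ∀ ⦃u v : V⦄, G.Adj u v → ∃ t, u ∈ bag t ∧ v ∈ bag t
  /-- the nodes whose bag contains a given vertex induce a connected subtree -/
  bag_conn : ∀ v : V, (tree.induce {t | v ∈ bag t}).Connected

/-- `G` has a tree decomposition all of whose bags have diameter at most `ℓ` in `G`. -/
def HasTDLength {V : Type} (G : SimpleGraph V) (ℓ : ℕ) : Prop :=
  ∃ (ι : Type) (td : TreeDecomp G ι), ∀ t, ∀ u ∈ td.bag t, ∀ v ∈ td.bag t, G.dist u v ≤ ℓ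

/-- The tree-length of `G`: the minimum length over all tree decompositions of `G`. -/
noncomputable def treeLength {V : Type} (G : SimpleGraph V) : ℕ :=
  sInf {ℓ | HasTDLength G ℓ}

/-- `u` and `v` are layering-equivalent w.r.t. source `s`: they lie at the same
distance `i` from `s` and are joined by a path all of whose (intermediate)
vertices are at distance at least `i` from `s`. -/
def LayerEquiv {V : Type} (G : SimpleGraph V) (s u v : V) : Prop :=
  G.dist s u = G.dist s v ∧
    ∃ p : G.Walk u v, p.IsPath ∧ ∀ w ∈ p.support, G.dist s u ≤ G.dist s w

/-- The layering class of the vertex `v` w.r.t. source `s`. -/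
def layeringClassOf {V : Type} (G : SimpleGraph V) (s v : V) : Set V :=
  {u | LayerEquiv G s v u}

/-- `C` is a layering class of `G` w.r.t. source `s`. -/
def IsLayeringClass {V : Type} (G : SimpleGraph V) (s : V) (C : Set V) : Prop :=
  ∃ v, C = layeringClassOf G s v


/-!
Fix a tree decomposition of length `ℓ`, a `u`–`v` path `P` staying in layers `≥ i`, and
geodesics `Q`, `R` from `s` to `u` and `v`. The bags meeting a walk span a subtree, so the
tree paths from a bag of `u` to bags of `v` and of `s` along bags meeting `P`, `Q` and `R`
share a median node; its bag contains `a ∈ Q`, `b ∈ R` and `c ∈ P`. As `d(s,c) ≥ i` and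
`d(a,c) ≤ ℓ`, the geodesic `Q` reaches `u` within `ℓ` steps after `a`, i.e. `d(a,u) ≤ ℓ`;
likewise `d(b,v) ≤ ℓ`, so `d(u,v) ≤ d(u,a) + d(a,b) + d(b,v) ≤ 3ℓ`.
-/

namespace SimpleGraph

variable {V : Type} {G : SimpleGraph V}

lemma Preconnected.exists_walk_support_subset {S : Set V} (hS : (G.induce S).Preconnected)
    {a b : V} (ha : a ∈ S) (hb : b ∈ S) :
    ∃ q : G.Walk a b, ∀ x ∈ q.support, x ∈ S := by
  obtain ⟨q⟩ := hS ⟨a, ha⟩ ⟨b, hb⟩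
  let q' : G.Walk a b := q.map (Embedding.induce S).toHom
  have hq' : q'.support = q.support.map Subtype.val := Walk.support_map _ _
  refine ⟨q', fun x hx => ?_⟩
  obtain ⟨z, -, rfl⟩ := List.mem_map.mp (hq' ▸ hx)
  exact z.2

lemma Walk.exists_eq_append_of_first_mem {S : Set V} {a b : V} (w : G.Walk a b)
    (hb : b ∈ S) :
    ∃ m ∈ S, ∃ (w₁ : G.Walk a m) (w₂ : G.Walk m b),
      w = w₁.append w₂ ∧ ∀ x ∈ w₁.support, x ∈ S → x = m := by
  induction w with
  | nil => exact ⟨_, hb, nil, nil, rfl, by simp⟩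
  | @cons x y z h w ih =>
    by_cases hx : x ∈ S
    · exact ⟨x, hx, nil, cons h w, rfl, by simp⟩
    · obtain ⟨m, hm, w₁, w₂, rfl, hfirst⟩ := ih hb
      refine ⟨m, hm, cons h w₁, w₂, rfl, ?_⟩
      intro t ht htS
      rw [support_cons, List.mem_cons] at ht
      rcases ht with rfl | ht
      exacts [absurd htS hx, hfirst t ht htS]

/-- The median property of trees. -/
lemma IsAcyclic.exists_mem_support_of_isPath (hG : G.IsAcyclic) {a b c : V}
    {p : G.Walk a b} (hp : p.IsPath) {q : G.Walk a c} (hq : q.IsPath)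
    {r : G.Walk b c} (hr : r.IsPath) :
    ∃ m, m ∈ p.support ∧ m ∈ q.support ∧ m ∈ r.support := by
  classical
  obtain ⟨m, hm, w₁, w₂, hsplit, hfirst⟩ :=
    p.reverse.exists_eq_append_of_first_mem (S := {x | x ∈ q.support}) q.start_mem_support
  have hmp : m ∈ p.support := by
    rw [← List.mem_reverse, ← Walk.support_reverse, hsplit, Walk.mem_support_append_iff]
    exact Or.inl w₁.end_mem_support
  have hw₁ : w₁.IsPath := (hsplit ▸ hp.reverse).of_append_left
  have hq₂ : (q.dropUntil m hm).IsPath := hq.dropUntil hm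
  -- `w₁` meets `q` only in `m`, which `q.dropUntil m` does not revisit
  have hpath : (w₁.append (q.dropUntil m hm)).IsPath := by
    rw [Walk.isPath_def, Walk.support_append]
    refine hw₁.support_nodup.append hq₂.support_nodup.tail fun x hx₁ hx₂ => ?_
    obtain rfl :=
      hfirst x hx₁ (q.support_dropUntil_subset_support hm (List.mem_of_mem_tail hx₂))
    rw [← Walk.cons_tail_support] at hx₂
    exact (List.nodup_cons.mp (Walk.cons_tail_support _ ▸ hq₂.support_nodup)).1 hx₂
  have hr_eq : r = w₁.append (q.dropUntil m hm) :=
    congrArg Subtype.val ((hG.subsingleton_path b c).elim ⟨r, hr⟩ ⟨_, hpath⟩)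
  refine ⟨m, hmp, hm, ?_⟩
  rw [hr_eq, Walk.mem_support_append_iff]
  exact Or.inl w₁.end_mem_support

lemma Walk.dist_add_dist_of_length_eq_dist {u v w : V} (p : G.Walk u v)
    (hp : p.length = G.dist u v) (hw : w ∈ p.support) :
    G.dist u w + G.dist w v = G.dist u v := by
  classical
  rw [← length_eq_dist_of_subwalk hp (p.isSubwalk_takeUntil hw),
    ← length_eq_dist_of_subwalk hp (p.isSubwalk_dropUntil hw), ← length_append, take_spec, hp]

end SimpleGraph

namespace TreeDecomp

open SimpleGraph

variable {V ι : Type} {G : SimpleGraph V}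

def single (G : SimpleGraph V) : TreeDecomp G Unit where
  tree := ⊥
  isTree := .of_subsingleton
  bag _ := Set.univ
  bag_cover _ := ⟨(), trivial⟩
  bag_edge _ _ _ := ⟨(), trivial, trivial⟩
  bag_conn v := by
    have : Nonempty {t : Unit | v ∈ (Set.univ : Set V)} := ⟨⟨(), trivial⟩⟩
    exact .of_subsingleton

lemma exists_walk_forall_bag_meets (td : TreeDecomp G ι) {x y : V} (w : G.Walk x y)
    {t₁ t₂ : ι} (h₁ : x ∈ td.bag t₁) (h₂ : y ∈ td.bag t₂) :
    ∃ π : td.tree.Walk t₁ t₂, ∀ t ∈ π.support, ∃ z ∈ w.support, z ∈ td.bag t := by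
  induction w generalizing t₁ with
  | @nil x =>
    obtain ⟨π, hπ⟩ := (td.bag_conn x).preconnected.exists_walk_support_subset h₁ h₂
    exact ⟨π, fun t ht => ⟨x, List.mem_singleton_self x, hπ t ht⟩⟩
  | @cons x x' y h w ih =>
    obtain ⟨t₀, ht₀x, ht₀x'⟩ := td.bag_edge h
    obtain ⟨π₁, hπ₁⟩ :=
      (td.bag_conn x).preconnected.exists_walk_support_subset h₁ ht₀x
    obtain ⟨π₂, hπ₂⟩ := ih ht₀x' h₂
    refine ⟨π₁.append π₂, fun t ht => ?_⟩
    rcases (Walk.mem_support_append_iff _ _).mp ht with ht | ht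
    · exact ⟨x, Walk.start_mem_support _, hπ₁ t ht⟩
    · obtain ⟨z, hz, hzt⟩ := hπ₂ t ht
      exact ⟨z, List.mem_cons_of_mem _ hz, hzt⟩

lemma exists_isPath_forall_bag_meets (td : TreeDecomp G ι) {x y : V} (w : G.Walk x y)
    {t₁ t₂ : ι} (h₁ : x ∈ td.bag t₁) (h₂ : y ∈ td.bag t₂) :
    ∃ π : td.tree.Walk t₁ t₂, π.IsPath ∧
      ∀ t ∈ π.support, ∃ z ∈ w.support, z ∈ td.bag t := by
  classical
  obtain ⟨π, hπ⟩ := td.exists_walk_forall_bag_meets w h₁ h₂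
  exact ⟨π.bypass, π.bypass_isPath, fun t ht => hπ t (π.support_bypass_subset_support ht)⟩

lemma exists_bag_meets_triangle (td : TreeDecomp G ι) {s u v : V}
    (P : G.Walk u v) (Q : G.Walk s u) (R : G.Walk s v) :
    ∃ t, ∃ a ∈ Q.support, ∃ b ∈ R.support, ∃ c ∈ P.support,
      a ∈ td.bag t ∧ b ∈ td.bag t ∧ c ∈ td.bag t := by
  obtain ⟨tu, htu⟩ := td.bag_cover u
  obtain ⟨tv, htv⟩ := td.bag_cover v
  obtain ⟨ts, hts⟩ := td.bag_cover s
  obtain ⟨πP, hπP, hP⟩ := td.exists_isPath_forall_bag_meets P htu htv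
  obtain ⟨πQ, hπQ, hQ⟩ := td.exists_isPath_forall_bag_meets Q.reverse htu hts
  obtain ⟨πR, hπR, hR⟩ := td.exists_isPath_forall_bag_meets R.reverse htv hts
  obtain ⟨t, htP, htQ, htR⟩ :=
    td.isTree.isAcyclic.exists_mem_support_of_isPath hπP hπQ hπR
  obtain ⟨c, hc, hct⟩ := hP t htP
  obtain ⟨a, ha, hat⟩ := hQ t htQ
  obtain ⟨b, hb, hbt⟩ := hR t htR
  rw [Walk.support_reverse, List.mem_reverse] at ha hb
  exact ⟨t, a, ha, b, hb, c, hc, hat, hbt, hct⟩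

end TreeDecomp

open SimpleGraph

lemma hasTDLength_diam {V : Type} {G : SimpleGraph V} (h : G.ediam ≠ ⊤) :
    HasTDLength G G.diam :=
  ⟨Unit, TreeDecomp.single G, fun _ _ _ _ _ => dist_le_diam h⟩

lemma hasTDLength_treeLength {V : Type} [Finite V] {G : SimpleGraph V} (hG : G.Connected) :
    HasTDLength G (treeLength G) :=
  haveI := hG.nonempty
  Nat.sInf_mem (s := {ℓ | HasTDLength G ℓ})
    ⟨_, hasTDLength_diam (G.connected_iff_ediam_ne_top.mp hG)⟩

lemma LayerEquiv.dist_le_three_mul {V : Type} {G : SimpleGraph V} {s u v : V} {ℓ : ℕ}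
    (hG : G.Connected) (h : LayerEquiv G s u v) (hℓ : HasTDLength G ℓ) :
    G.dist u v ≤ 3 * ℓ := by
  obtain ⟨ι, td, hlen⟩ := hℓ
  obtain ⟨hsuv, P, -, hP⟩ := h
  obtain ⟨Q, hQ⟩ := hG.exists_walk_length_eq_dist s u
  obtain ⟨R, hR⟩ := hG.exists_walk_length_eq_dist s v
  obtain ⟨t, a, ha, b, hb, c, hc, hat, hbt, hct⟩ := td.exists_bag_meets_triangle P Q R
  have hQa := Q.dist_add_dist_of_length_eq_dist hQ ha
  have hRb := R.dist_add_dist_of_length_eq_dist hR hb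
  have hsc : G.dist s u ≤ G.dist s c := hP c hc
  have hac : G.dist s c ≤ G.dist s a + ℓ :=
    hG.dist_triangle.trans (by gcongr; exact hlen t a hat c hct)
  have hbc : G.dist s c ≤ G.dist s b + ℓ :=
    hG.dist_triangle.trans (by gcongr; exact hlen t b hbt c hct)
  -- `d(a,u) = d(s,u) - d(s,a) ≤ d(s,c) - d(s,a) ≤ ℓ`, and likewise `d(b,v) ≤ ℓ`
  calc G.dist u v ≤ G.dist u a + G.dist a b + G.dist b v :=
        hG.dist_triangle.trans (by gcongr; exact hG.dist_triangle)
    _ ≤ ℓ + ℓ + ℓ := by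
        gcongr
        · rw [dist_comm]; omega
        · exact hlen t a hat b hbt
        · omega
    _ = 3 * ℓ := by ring

/-- If `u` and `v` are layering-equivalent vertices of `G` with
respect to `s`, then `dist_G(u,v) ≤ 3 · tl(G) + 1`. -/
theorem layerEquiv_dist_le {V : Type} [Fintype V]
    (G : SimpleGraph V) (hG : G.Connected) (s u v : V)
    (h : LayerEquiv G s u v) :
    G.dist u v ≤ 3 * treeLength G + 1 :=
  (h.dist_le_three_mul hG (hasTDLength_treeLength hG)).trans (Nat.le_succ _)
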